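/- arXiv:2407.20941 — 7 statements merged into one kernel-verified Lean document; each statement's English description precedes it below -/
import Mathlib

section
/- Let m, l, r, s ≥ 1 be integers and n = m + l + r + s. Let T be a finite set partitioned into sets M, L, R, S of sizes m, l, r, s respectively, with a uniformly random arrival order on T. Then the probability that the first arriving item belongs to M and that every item of L ∪ R arrives before every item of S equals (m/n)·((l+r)!·s!/(l+r+s)!). -/
open Finset

def goodPair {n : ℕ} [NeZero n] (a b : ℕ) (p : Finset (Fin n) × Finset (Fin n)) : Prop :=
  Disjoint p.1 p.2 ∧ p.1.card = a ∧ p.2.card = b ∧ (0 : Fin n) ∉ p.1 ∧ (0 : Fin n) ∉ p.2 ∧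
    ∀ x ∈ p.1, ∀ y ∈ p.2, x < y

instance {n : ℕ} [NeZero n] (a b : ℕ) : DecidablePred (goodPair (n := n) a b) := fun p => by
  unfold goodPair; infer_instance

lemma split_eq {α : Type*} [LinearOrder α] [DecidableEq α] {P₁ P₂ : Finset α} {a : ℕ}
    (hd : Disjoint P₁ P₂) (h1 : P₁.card = a) (hlt : ∀ x ∈ P₁, ∀ y ∈ P₂, x < y) :
    P₁ = (P₁ ∪ P₂).filter (fun x => ((P₁ ∪ P₂).filter (· ≤ x)).card ≤ a) := by
  ext x
  simp only [mem_filter, mem_union]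
  constructor
  · intro hx
    refine ⟨Or.inl hx, ?_⟩
    have hsub : (P₁ ∪ P₂).filter (· ≤ x) ⊆ P₁ := by
      intro y hy
      simp only [mem_filter, mem_union] at hy
      rcases hy.1 with h | h
      · exact h
      · exact absurd hy.2 (not_le.2 (hlt x hx y h))
    calc ((P₁ ∪ P₂).filter (· ≤ x)).card ≤ P₁.card := card_le_card hsub
      _ = a := h1
  · rintro ⟨h | h, hc⟩
    · exact h
    · exfalso
      have hxP : x ∉ P₁ := fun hx => absurd h (disjoint_left.1 hd hx)
      have hsub : insert x P₁ ⊆ (P₁ ∪ P₂).filter (· ≤ x) := by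
        intro y hy
        rcases mem_insert.1 hy with rfl | hy
        · exact mem_filter.2 ⟨mem_union_right _ h, le_rfl⟩
        · exact mem_filter.2 ⟨mem_union_left _ hy, (hlt y hy x h).le⟩
      have := card_le_card hsub
      rw [card_insert_of_notMem hxP, h1] at this
      omega

lemma card_filter_val_lt (k a : ℕ) (h : a ≤ k) :
    ((Finset.univ : Finset (Fin k)).filter (fun j : Fin k => (j : ℕ) < a)).card = a := by
  have he : (Finset.univ : Finset (Fin k)).filter (fun j : Fin k => (j : ℕ) < a)
      = (Finset.range a).attachFin (fun m hm => lt_of_lt_of_le (mem_range.1 hm) h) := by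
    ext j
    simp [Finset.mem_attachFin]
  rw [he, card_attachFin, card_range]

lemma card_goodPairs {n : ℕ} [NeZero n] (a b : ℕ) :
    ((Finset.univ : Finset (Finset (Fin n) × Finset (Fin n))).filter (goodPair a b)).card
      = (n - 1).choose (a + b) := by
  classical
  have key : ((Finset.univ : Finset (Finset (Fin n) × Finset (Fin n))).filter (goodPair a b)).card
      = ((Finset.univ.erase (0 : Fin n)).powersetCard (a + b)).card := by
    apply Finset.card_bij (fun p _ => p.1 ∪ p.2)
    · rintro ⟨P₁, P₂⟩ hp
      rw [mem_filter] at hp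
      obtain ⟨-, hd, h1, h2, h01, h02, hlt⟩ := hp
      rw [mem_powersetCard]
      refine ⟨?_, by rw [card_union_of_disjoint hd, h1, h2]⟩
      intro x hx
      refine mem_erase.2 ⟨?_, mem_univ x⟩
      rintro rfl
      rcases mem_union.1 hx with h | h
      · exact h01 h
      · exact h02 h
    · rintro ⟨P₁, P₂⟩ hp ⟨Q₁, Q₂⟩ hq huv
      rw [mem_filter] at hp hq
      obtain ⟨-, hd, h1, -, -, -, hlt⟩ := hp
      obtain ⟨-, hd', h1', -, -, -, hlt'⟩ := hq
      simp only at huv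
      have e1 : P₁ = Q₁ := by
        have t1 := split_eq hd h1 hlt
        have t2 := split_eq hd' h1' hlt'
        simp only at t1 t2
        conv_lhs => rw [t1]
        conv_rhs => rw [t2]
        rw [huv]
      have e2 : P₂ = Q₂ := by
        have t1 := union_sdiff_cancel_left hd
        have t2 := union_sdiff_cancel_left hd'
        simp only at t1 t2
        rw [← t1, ← t2, huv, e1]
      exact Prod.ext e1 e2
    · intro P hP
      rw [mem_powersetCard] at hP
      obtain ⟨hsub, hcard⟩ := hP
      set e := P.orderIsoOfFin hcard with he
      have hinj : Function.Injective (fun j : Fin (a + b) => ((e j : Fin n))) := by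
        intro i j hij
        exact e.injective (Subtype.ext hij)
      refine ⟨((Finset.univ.filter (fun j : Fin (a+b) => (j : ℕ) < a)).image (fun j => (e j : Fin n)),
        (Finset.univ.filter (fun j : Fin (a+b) => ¬ (j : ℕ) < a)).image (fun j => (e j : Fin n))), ?_, ?_⟩
      · rw [mem_filter]
        refine ⟨mem_univ _, ?_, ?_, ?_, ?_, ?_, ?_⟩
        · exact (Finset.disjoint_image hinj).2 (disjoint_filter_filter_not _ _ _)
        · rw [card_image_of_injective _ hinj, card_filter_val_lt _ _ (Nat.le_add_right a b)]
        · rw [card_image_of_injective _ hinj]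
          have := card_filter_add_card_filter_not
            (s := (Finset.univ : Finset (Fin (a+b)))) (p := fun j => (j : ℕ) < a)
          rw [card_filter_val_lt _ _ (Nat.le_add_right a b)] at this
          simp only [card_univ, Fintype.card_fin] at this
          omega
        · intro h0
          rcases mem_image.1 h0 with ⟨j, -, hj⟩
          have : (e j : Fin n) ∈ P := (e j).2
          rw [hj] at this
          exact absurd (mem_erase.1 (hsub this)).1 (by simp)
        · intro h0
          rcases mem_image.1 h0 with ⟨j, -, hj⟩
          have : (e j : Fin n) ∈ P := (e j).2
          rw [hj] at this
          exact absurd (mem_erase.1 (hsub this)).1 (by simp)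
        · intro x hx y hy
          rcases mem_image.1 hx with ⟨i, hi, rfl⟩
          rcases mem_image.1 hy with ⟨j, hj, rfl⟩
          rw [mem_filter] at hi hj
          have hij : i < j := by
            have : (i : ℕ) < (j : ℕ) := by omega
            exact this
          exact Subtype.coe_lt_coe.2 (e.strictMono hij)
      · simp only
        apply Finset.eq_of_subset_of_card_le
        · intro x hx
          rcases mem_union.1 hx with h | h <;>
          · rcases mem_image.1 h with ⟨j, -, rfl⟩
            exact (e j).2
        · rw [card_union_of_disjoint ((Finset.disjoint_image hinj).2 (disjoint_filter_filter_not _ _ _)),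
            card_image_of_injective _ hinj, card_image_of_injective _ hinj, hcard,
            card_filter_val_lt _ _ (Nat.le_add_right a b)]
          have := card_filter_add_card_filter_not
            (s := (Finset.univ : Finset (Fin (a+b)))) (p := fun j => (j : ℕ) < a)
          rw [card_filter_val_lt _ _ (Nat.le_add_right a b)] at this
          simp only [card_univ, Fintype.card_fin] at this
          omega
  rw [key, card_powersetCard, card_erase_of_mem (mem_univ _), card_univ, Fintype.card_fin]

section build
variable {T : Type*} [Fintype T] [DecidableEq T] {n : ℕ} [NeZero n]

def buildFun (M A S : Finset T) (p : Finset (Fin n) × Finset (Fin n))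
    (eM : ↥M ≃ ↥((p.1 ∪ p.2)ᶜ)) (eA : ↥A ≃ ↥p.1) (eS : ↥S ≃ ↥p.2) : T → Fin n :=
  fun x =>
    if hx : x ∈ M then (eM ⟨x, hx⟩ : Fin n)
    else if hx' : x ∈ A then (eA ⟨x, hx'⟩ : Fin n)
    else if hx'' : x ∈ S then (eS ⟨x, hx''⟩ : Fin n)
    else 0

variable {M A S : Finset T} {p : Finset (Fin n) × Finset (Fin n)}
  {eM : ↥M ≃ ↥((p.1 ∪ p.2)ᶜ)} {eA : ↥A ≃ ↥p.1} {eS : ↥S ≃ ↥p.2}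

lemma buildFun_mem_M {x : T} (hx : x ∈ M) : buildFun M A S p eM eA eS x ∈ (p.1 ∪ p.2)ᶜ := by
  simp only [buildFun, dif_pos hx]; exact (eM ⟨x, hx⟩).2

lemma buildFun_mem_A {x : T} (hx : x ∉ M) (hx' : x ∈ A) : buildFun M A S p eM eA eS x ∈ p.1 := by
  simp only [buildFun, dif_neg hx, dif_pos hx']; exact (eA ⟨x, hx'⟩).2

lemma buildFun_mem_S {x : T} (hx : x ∉ M) (hx' : x ∉ A) (hx'' : x ∈ S) :
    buildFun M A S p eM eA eS x ∈ p.2 := by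
  simp only [buildFun, dif_neg hx, dif_neg hx', dif_pos hx'']; exact (eS ⟨x, hx''⟩).2

lemma buildFun_inj (hMA : Disjoint M A) (hMS : Disjoint M S)
    (hcov : M ∪ A ∪ S = Finset.univ) (hd : Disjoint p.1 p.2) :
    Function.Injective (buildFun M A S p eM eA eS) := by
  have hmem : ∀ x : T, x ∈ M ∨ (x ∉ M ∧ x ∈ A) ∨ (x ∉ M ∧ x ∉ A ∧ x ∈ S) := by
    intro x
    have hx := mem_univ x
    rw [← hcov] at hx
    simp only [mem_union] at hx
    by_cases h1 : x ∈ M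
    · exact Or.inl h1
    · by_cases h2 : x ∈ A
      · exact Or.inr (Or.inl ⟨h1, h2⟩)
      · exact Or.inr (Or.inr ⟨h1, h2, by tauto⟩)
  intro x y h
  rcases hmem x with hx | ⟨hx1, hx2⟩ | ⟨hx1, hx2, hx3⟩ <;>
    rcases hmem y with hy | ⟨hy1, hy2⟩ | ⟨hy1, hy2, hy3⟩
  · -- M M
    simp only [buildFun, dif_pos hx, dif_pos hy] at h
    exact congrArg Subtype.val (eM.injective (Subtype.ext h))
  · -- M A
    exact absurd (h.symm ▸ mem_union_left p.2 (buildFun_mem_A hy1 hy2))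
      (mem_compl.1 (buildFun_mem_M hx))
  · -- M S
    exact absurd (h.symm ▸ mem_union_right p.1 (buildFun_mem_S hy1 hy2 hy3))
      (mem_compl.1 (buildFun_mem_M hx))
  · -- A M
    exact absurd (h ▸ mem_union_left p.2 (buildFun_mem_A hx1 hx2))
      (mem_compl.1 (buildFun_mem_M hy))
  · -- A A
    simp only [buildFun, dif_neg hx1, dif_pos hx2, dif_neg hy1, dif_pos hy2] at h
    exact congrArg Subtype.val (eA.injective (Subtype.ext h))
  · -- A S
    exact absurd (h ▸ buildFun_mem_A hx1 hx2) (disjoint_left.1 hd · (buildFun_mem_S hy1 hy2 hy3))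
  · -- S M
    exact absurd (h ▸ mem_union_right p.1 (buildFun_mem_S hx1 hx2 hx3))
      (mem_compl.1 (buildFun_mem_M hy))
  · -- S A
    exact absurd (h.symm ▸ buildFun_mem_A hy1 hy2)
      (disjoint_left.1 hd · (buildFun_mem_S hx1 hx2 hx3))
  · -- S S
    simp only [buildFun, dif_neg hx1, dif_neg hx2, dif_pos hx3, dif_neg hy1, dif_neg hy2,
      dif_pos hy3] at h
    exact congrArg Subtype.val (eS.injective (Subtype.ext h))
end build

section build2
variable {T : Type*} [Fintype T] [DecidableEq T] {n : ℕ} [NeZero n]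
variable (M A S : Finset T)

/-- The data parameterizing the good permutations. -/
abbrev PairsData (a b : ℕ) : Type _ :=
  Σ p : {p : Finset (Fin n) × Finset (Fin n) // goodPair a b p},
    (↥M ≃ ↥((p.1.1 ∪ p.1.2)ᶜ)) × (↥A ≃ ↥p.1.1) × (↥S ≃ ↥p.1.2)

variable {M A S}

noncomputable def buildEquiv (hMA : Disjoint M A) (hMS : Disjoint M S)
    (hcov : M ∪ A ∪ S = Finset.univ) (hcT : Fintype.card T = n) {a b : ℕ}
    (d : PairsData (n := n) M A S a b) : T ≃ Fin n :=
  Equiv.ofBijective (buildFun M A S d.1.1 d.2.1 d.2.2.1 d.2.2.2)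
    ((Fintype.bijective_iff_injective_and_card _).2
      ⟨buildFun_inj hMA hMS hcov d.1.2.1, by rw [hcT, Fintype.card_fin]⟩)

lemma buildEquiv_cond (hMA : Disjoint M A) (hMS : Disjoint M S) (hAS : Disjoint A S)
    (hcov : M ∪ A ∪ S = Finset.univ) (hcT : Fintype.card T = n) {a b : ℕ}
    (d : PairsData (n := n) M A S a b) :
    (∀ x : T, (∀ y : T, buildEquiv hMA hMS hcov hcT d x ≤ buildEquiv hMA hMS hcov hcT d y) → x ∈ M)
      ∧ ∀ x ∈ A, ∀ y ∈ S, buildEquiv hMA hMS hcov hcT d x < buildEquiv hMA hMS hcov hcT d y := by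
  obtain ⟨⟨p, hp⟩, eM, eA, eS⟩ := d
  obtain ⟨hd, h1, h2, h01, h02, hlt⟩ := hp
  set σ := buildEquiv hMA hMS hcov hcT ⟨⟨p, ⟨hd, h1, h2, h01, h02, hlt⟩⟩, eM, eA, eS⟩ with hσ
  have happ : ∀ x : T, σ x = buildFun M A S p eM eA eS x := fun x => rfl
  have hmem : ∀ x : T, x ∉ M → σ x ∈ p.1 ∪ p.2 := by
    intro x hx
    have hxu := mem_univ x
    rw [← hcov] at hxu
    simp only [mem_union] at hxu
    by_cases h2' : x ∈ A
    · exact mem_union_left _ (happ x ▸ buildFun_mem_A hx h2')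
    · have h3 : x ∈ S := by tauto
      exact mem_union_right _ (happ x ▸ buildFun_mem_S hx h2' h3)
  constructor
  · intro x hmin
    by_contra hx
    have h0 : σ x = 0 := by
      have := hmin (σ.symm 0)
      rw [Equiv.apply_symm_apply] at this
      exact Fin.le_zero_iff'.1 this
    have := hmem x hx
    rw [h0] at this
    rcases mem_union.1 this with h | h
    · exact h01 h
    · exact h02 h
  · intro x hx y hy
    have hxM : x ∉ M := fun h => disjoint_left.1 hMA h hx
    have hyM : y ∉ M := fun h => disjoint_left.1 hMS h hy
    have hyA : y ∉ A := fun h => disjoint_left.1 hAS h hy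
    have hx1 : σ x ∈ p.1 := happ x ▸ buildFun_mem_A hxM hx
    have hy2 : σ y ∈ p.2 := happ y ▸ buildFun_mem_S hyM hyA hy
    exact hlt _ hx1 _ hy2
end build2

section build3
variable {T : Type*} [Fintype T] [DecidableEq T] {n : ℕ} [NeZero n]
variable {M A S : Finset T}

lemma image_A_eq {p : Finset (Fin n) × Finset (Fin n)}
    {eM : ↥M ≃ ↥((p.1 ∪ p.2)ᶜ)} {eA : ↥A ≃ ↥p.1} {eS : ↥S ≃ ↥p.2}
    (hMA : Disjoint M A) (hMS : Disjoint M S)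
    (hcov : M ∪ A ∪ S = Finset.univ) (hd : Disjoint p.1 p.2) (hcard : p.1.card = A.card) :
    A.image (buildFun M A S p eM eA eS) = p.1 := by
  apply eq_of_subset_of_card_le
  · intro x hx
    rcases mem_image.1 hx with ⟨y, hy, rfl⟩
    exact buildFun_mem_A (fun h => disjoint_left.1 hMA h hy) hy
  · rw [card_image_of_injective _ (buildFun_inj hMA hMS hcov hd), hcard]

lemma image_S_eq {p : Finset (Fin n) × Finset (Fin n)}
    {eM : ↥M ≃ ↥((p.1 ∪ p.2)ᶜ)} {eA : ↥A ≃ ↥p.1} {eS : ↥S ≃ ↥p.2}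
    (hMA : Disjoint M A) (hMS : Disjoint M S) (hAS : Disjoint A S)
    (hcov : M ∪ A ∪ S = Finset.univ) (hd : Disjoint p.1 p.2) (hcard : p.2.card = S.card) :
    S.image (buildFun M A S p eM eA eS) = p.2 := by
  apply eq_of_subset_of_card_le
  · intro x hx
    rcases mem_image.1 hx with ⟨y, hy, rfl⟩
    exact buildFun_mem_S (fun h => disjoint_left.1 hMS h hy)
      (fun h => disjoint_left.1 hAS h hy) hy
  · rw [card_image_of_injective _ (buildFun_inj hMA hMS hcov hd), hcard]

lemma card_cond_eq (hMA : Disjoint M A) (hMS : Disjoint M S) (hAS : Disjoint A S)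
    (hcov : M ∪ A ∪ S = Finset.univ) (hcT : Fintype.card T = n) :
    Fintype.card {σ : T ≃ Fin n //
        (∀ x : T, (∀ y : T, σ x ≤ σ y) → x ∈ M) ∧ ∀ x ∈ A, ∀ y ∈ S, σ x < σ y}
      = Fintype.card (PairsData (n := n) M A S A.card S.card) := by
  classical
  apply (Fintype.card_of_bijective
    (f := fun d : PairsData (n := n) M A S A.card S.card =>
      (⟨buildEquiv hMA hMS hcov hcT d, buildEquiv_cond hMA hMS hAS hcov hcT d⟩ :
        {σ : T ≃ Fin n //
          (∀ x : T, (∀ y : T, σ x ≤ σ y) → x ∈ M) ∧ ∀ x ∈ A, ∀ y ∈ S, σ x < σ y})) ?_).symm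
  constructor
  · rintro ⟨⟨p, hp⟩, eM, eA, eS⟩ ⟨⟨q, hq⟩, eM', eA', eS'⟩ h
    have h' : buildEquiv hMA hMS hcov hcT (⟨⟨p, hp⟩, eM, eA, eS⟩ :
        PairsData (n := n) M A S A.card S.card) = buildEquiv hMA hMS hcov hcT
          (⟨⟨q, hq⟩, eM', eA', eS'⟩ : PairsData (n := n) M A S A.card S.card) :=
      Subtype.ext_iff.1 h
    have hf : ∀ x : T, buildFun M A S p eM eA eS x = buildFun M A S q eM' eA' eS' x :=
      fun x => Equiv.ext_iff.1 h' x
    have hf' : buildFun M A S p eM eA eS = buildFun M A S q eM' eA' eS' := funext hf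
    have hpq : p = q := by
      have e1 : p.1 = q.1 := by
        rw [← image_A_eq hMA hMS hcov hp.1 hp.2.1,
          ← image_A_eq hMA hMS hcov hq.1 hq.2.1, hf']
      have e2 : p.2 = q.2 := by
        rw [← image_S_eq hMA hMS hAS hcov hp.1 hp.2.2.1,
          ← image_S_eq hMA hMS hAS hcov hq.1 hq.2.2.1, hf']
      exact Prod.ext e1 e2
    subst hpq
    refine Sigma.ext rfl (heq_of_eq ?_)
    refine Prod.ext ?_ (Prod.ext ?_ ?_) <;> dsimp only
    · apply Equiv.ext
      rintro ⟨x, hx⟩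
      apply Subtype.ext
      have := hf x
      simp only [buildFun, dif_pos hx] at this
      exact this
    · apply Equiv.ext
      rintro ⟨x, hx⟩
      apply Subtype.ext
      have hxM : x ∉ M := fun h => disjoint_left.1 hMA h hx
      have := hf x
      simp only [buildFun, dif_neg hxM, dif_pos hx] at this
      exact this
    · apply Equiv.ext
      rintro ⟨x, hx⟩
      apply Subtype.ext
      have hxM : x ∉ M := fun h => disjoint_left.1 hMS h hx
      have hxA : x ∉ A := fun h => disjoint_left.1 hAS h hx
      have := hf x
      simp only [buildFun, dif_neg hxM, dif_neg hxA, dif_pos hx] at this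
      exact this
  · rintro ⟨σ, hσ⟩
    set P₁ := A.image σ with hP₁
    set P₂ := S.image σ with hP₂
    have hMcard : M.card = n - (A.card + S.card) := by
      have d2 : Disjoint (M ∪ A) S := by
        rw [disjoint_union_left]; exact ⟨hMS, hAS⟩
      have : (M ∪ A ∪ S).card = M.card + A.card + S.card := by
        rw [card_union_of_disjoint d2, card_union_of_disjoint hMA]
      rw [hcov, card_univ, hcT] at this
      omega
    have hgood : goodPair A.card S.card (P₁, P₂) := by
      refine ⟨(Finset.disjoint_image σ.injective).2 hAS,
        card_image_of_injective _ σ.injective, card_image_of_injective _ σ.injective, ?_, ?_, ?_⟩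
      · intro h0
        rcases mem_image.1 h0 with ⟨x, hx, hx0⟩
        have hxM : x ∈ M := hσ.1 x (fun y => by rw [hx0]; exact Fin.zero_le _)
        exact disjoint_left.1 hMA hxM hx
      · intro h0
        rcases mem_image.1 h0 with ⟨x, hx, hx0⟩
        have hxM : x ∈ M := hσ.1 x (fun y => by rw [hx0]; exact Fin.zero_le _)
        exact disjoint_left.1 hMS hxM hx
      · intro x hx y hy
        rcases mem_image.1 hx with ⟨u, hu, rfl⟩
        rcases mem_image.1 hy with ⟨v, hv, rfl⟩
        exact hσ.2 u hu v hv
    have himgM : M.image σ = (P₁ ∪ P₂)ᶜ := by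
      apply eq_of_subset_of_card_le
      · intro x hx
        rcases mem_image.1 hx with ⟨u, hu, rfl⟩
        rw [mem_compl]
        intro hmem
        rcases mem_union.1 hmem with h | h
        · rcases mem_image.1 h with ⟨v, hv, hvu⟩
          have : v = u := σ.injective hvu
          subst this
          exact disjoint_left.1 hMA hu hv
        · rcases mem_image.1 h with ⟨v, hv, hvu⟩
          have : v = u := σ.injective hvu
          subst this
          exact disjoint_left.1 hMS hu hv
      · rw [card_image_of_injective _ σ.injective, card_compl,
          card_union_of_disjoint hgood.1, hgood.2.1, hgood.2.2.1, Fintype.card_fin, hMcard]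
    have cM : Fintype.card ↥((P₁ ∪ P₂)ᶜ) = Fintype.card ↥M := by
      rw [Fintype.card_coe, Fintype.card_coe, ← himgM, card_image_of_injective _ σ.injective]
    have cA : Fintype.card ↥P₁ = Fintype.card ↥A := by
      rw [Fintype.card_coe, Fintype.card_coe, hP₁, card_image_of_injective _ σ.injective]
    have cS : Fintype.card ↥P₂ = Fintype.card ↥S := by
      rw [Fintype.card_coe, Fintype.card_coe, hP₂, card_image_of_injective _ σ.injective]
    let eM : ↥M ≃ ↥(((P₁, P₂).1 ∪ (P₁, P₂).2)ᶜ) :=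
      Equiv.ofBijective (fun x => ⟨σ x, himgM ▸ mem_image_of_mem σ x.2⟩)
        ((Fintype.bijective_iff_injective_and_card _).2
          ⟨fun u v huv => Subtype.ext (σ.injective (Subtype.ext_iff.1 huv)), cM.symm⟩)
    let eA : ↥A ≃ ↥(P₁, P₂).1 :=
      Equiv.ofBijective (fun x => ⟨σ x, mem_image_of_mem σ x.2⟩)
        ((Fintype.bijective_iff_injective_and_card _).2
          ⟨fun u v huv => Subtype.ext (σ.injective (Subtype.ext_iff.1 huv)), cA.symm⟩)
    let eS : ↥S ≃ ↥(P₁, P₂).2 :=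
      Equiv.ofBijective (fun x => ⟨σ x, mem_image_of_mem σ x.2⟩)
        ((Fintype.bijective_iff_injective_and_card _).2
          ⟨fun u v huv => Subtype.ext (σ.injective (Subtype.ext_iff.1 huv)), cS.symm⟩)
    refine ⟨⟨⟨(P₁, P₂), hgood⟩, eM, eA, eS⟩, ?_⟩
    apply Subtype.ext
    apply Equiv.ext
    intro x
    show buildFun M A S (P₁, P₂) eM eA eS x = σ x
    have hxu := mem_univ x
    rw [← hcov] at hxu
    simp only [mem_union] at hxu
    by_cases h1 : x ∈ M
    · simp only [buildFun, dif_pos h1]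
      rfl
    · by_cases h2 : x ∈ A
      · simp only [buildFun, dif_neg h1, dif_pos h2]
        rfl
      · have h3 : x ∈ S := by tauto
        simp only [buildFun, dif_neg h1, dif_neg h2, dif_pos h3]
        rfl
end build3

section build4
variable {T : Type*} [Fintype T] [DecidableEq T] {n : ℕ} [NeZero n]
variable {M A S : Finset T}

lemma card_pairsData {m a b : ℕ} (hM : M.card = m) (hA : A.card = a) (hS : S.card = b)
    (hn : n = m + a + b) :
    Fintype.card (PairsData (n := n) M A S a b)
      = (n - 1).choose (a + b) * (m.factorial * (a.factorial * b.factorial)) := by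
  classical
  rw [Fintype.card_sigma]
  have hterm : ∀ p : {p : Finset (Fin n) × Finset (Fin n) // goodPair a b p},
      Fintype.card ((↥M ≃ ↥((p.1.1 ∪ p.1.2)ᶜ)) × (↥A ≃ ↥p.1.1) × (↥S ≃ ↥p.1.2))
        = m.factorial * (a.factorial * b.factorial) := by
    rintro ⟨⟨P₁, P₂⟩, hP⟩
    obtain ⟨hd, h1, h2, -, -, -⟩ := hP
    simp only at hd h1 h2 ⊢
    have c1 : Fintype.card ↥((P₁ ∪ P₂)ᶜ) = m := by
      rw [Fintype.card_coe, card_compl, card_union_of_disjoint hd, h1, h2, Fintype.card_fin]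
      omega
    have cM : Fintype.card ↥M = m := by rw [Fintype.card_coe, hM]
    have cA : Fintype.card ↥A = a := by rw [Fintype.card_coe, hA]
    have cS : Fintype.card ↥S = b := by rw [Fintype.card_coe, hS]
    have c2 : Fintype.card ↥P₁ = a := by rw [Fintype.card_coe, h1]
    have c3 : Fintype.card ↥P₂ = b := by rw [Fintype.card_coe, h2]
    rw [Fintype.card_prod, Fintype.card_prod,
      Fintype.card_equiv (Fintype.equivOfCardEq (by rw [c1, cM])),
      Fintype.card_equiv (Fintype.equivOfCardEq (by rw [c2, cA])),
      Fintype.card_equiv (Fintype.equivOfCardEq (by rw [c3, cS])), cM, cA, cS]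
  rw [Finset.sum_congr rfl (fun p _ => hterm p), Finset.sum_const, smul_eq_mul, card_univ,
    Fintype.card_subtype, card_goodPairs]

end build4



/-- For integers `m, l, r, s ≥ 1`, `n = m + l + r + s`, and a finite set `T`
partitioned into `M, L, R, S` of sizes `m, l, r, s`, under a uniformly random bijection
`σ : T ≃ Fin n` (`σ x < σ y` meaning `x` arrives before `y`, the first arriving item being
the one minimizing `σ`), the probability that the first arriving item belongs to `M` and
every item of `L ∪ R` arrives before every item of `S` equals
`(m/n) · ((l+r)! · s! / (l+r+s)!)`. -/
theorem stmt_1 (m l r s : ℕ) (hm : 1 ≤ m) (hl : 1 ≤ l) (hr : 1 ≤ r) (hs : 1 ≤ s)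
    (T : Type*) [Fintype T] [DecidableEq T]
    (M L R S : Finset T)
    (hM : M.card = m) (hL : L.card = l) (hR : R.card = r) (hS : S.card = s)
    (hML : Disjoint M L) (hMR : Disjoint M R) (hMS : Disjoint M S)
    (hLR : Disjoint L R) (hLS : Disjoint L S) (hRS : Disjoint R S)
    (hcover : M ∪ L ∪ R ∪ S = Finset.univ) :
    (((Finset.univ : Finset (T ≃ Fin (m + l + r + s))).filter
        (fun σ => (∀ x : T, (∀ y : T, σ x ≤ σ y) → x ∈ M) ∧
          ∀ x ∈ L ∪ R, ∀ y ∈ S, σ x < σ y)).card : ℝ) /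
      (Fintype.card (T ≃ Fin (m + l + r + s)) : ℝ) =
    ((m : ℝ) / ((m : ℝ) + l + r + s)) *
      ((Nat.factorial (l + r) : ℝ) * (Nat.factorial s : ℝ) /
        (Nat.factorial (l + r + s) : ℝ)) := by
  classical
  haveI : NeZero (m + l + r + s) := ⟨by omega⟩
  set n := m + l + r + s with hn
  have hMA : Disjoint M (L ∪ R) := by rw [disjoint_union_right]; exact ⟨hML, hMR⟩
  have hAS : Disjoint (L ∪ R) S := by rw [disjoint_union_left]; exact ⟨hLS, hRS⟩
  have hcov : M ∪ (L ∪ R) ∪ S = Finset.univ := by rw [← union_assoc, hcover]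
  have hA : (L ∪ R).card = l + r := by rw [card_union_of_disjoint hLR, hL, hR]
  have hcT : Fintype.card T = n := by
    have d2 : Disjoint (M ∪ (L ∪ R)) S := disjoint_union_left.2 ⟨hMS, hAS⟩
    have hcu : (M ∪ (L ∪ R) ∪ S).card = M.card + (L ∪ R).card + S.card := by
      rw [card_union_of_disjoint d2, card_union_of_disjoint hMA]
    rw [hcov, card_univ, hM, hA, hS] at hcu
    omega
  rw [← Fintype.card_subtype, card_cond_eq hMA hMS hAS hcov hcT,
    card_pairsData hM rfl rfl (by rw [hA, hS]; omega), hA, hS,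
    Fintype.card_equiv (Fintype.equivFinOfCardEq hcT), hcT]
  -- arithmetic
  have hk : l + r + s ≤ n - 1 := by omega
  have h4 := Nat.choose_mul_factorial_mul_factorial hk
  have h5 : n - 1 - (l + r + s) = m - 1 := by omega
  rw [h5] at h4
  have hm' : m.factorial = m * (m - 1).factorial := by
    obtain ⟨m', rfl⟩ : ∃ m', m = m' + 1 := ⟨m - 1, by omega⟩
    simp [Nat.factorial_succ]
  have hn' : n.factorial = n * (n - 1).factorial := by
    obtain ⟨n', hn'⟩ : ∃ n', n = n' + 1 := ⟨n - 1, by omega⟩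
    rw [hn', Nat.factorial_succ]
    simp
  have key : (n - 1).choose (l + r + s) * m.factorial * n * (l + r + s).factorial
      = m * n.factorial := by
    calc (n - 1).choose (l + r + s) * m.factorial * n * (l + r + s).factorial
        = ((n - 1).choose (l + r + s) * (l + r + s).factorial * (m - 1).factorial) * m * n := by
          rw [hm']; ring
      _ = (n - 1).factorial * m * n := by rw [h4]
      _ = m * n.factorial := by rw [hn']; ring
  have hRkey : ((n - 1).choose (l + r + s) : ℝ) * (m.factorial : ℝ) * (n : ℝ)
      * ((l + r + s).factorial : ℝ) = (m : ℝ) * (n.factorial : ℝ) := by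
    exact_mod_cast key
  have hne1 : (n : ℝ) ≠ 0 := Nat.cast_ne_zero.2 (by omega)
  have hne2 : ((n.factorial : ℕ) : ℝ) ≠ 0 := Nat.cast_ne_zero.2 (Nat.factorial_ne_zero _)
  have hne3 : (((l + r + s).factorial : ℕ) : ℝ) ≠ 0 := Nat.cast_ne_zero.2 (Nat.factorial_ne_zero _)
  have hnR : (m : ℝ) + l + r + s = (n : ℝ) := by rw [hn]; push_cast; ring
  rw [hnR]
  push_cast
  field_simp
  linear_combination hRkey
end

section
/- For all integers l, r, m ≥ 1 and s ≥ 3, the following inequality holds: (m/(m+l+r+s)) · ( l!·s!/(l+s)! + r!·s!/(r+s)! ) ≤ 1/2. -/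
lemma aux_term_le (l s : ℕ) (hl : 1 ≤ l) (hs : 3 ≤ s) :
    (Nat.factorial l : ℝ) * (Nat.factorial s : ℝ) / (Nat.factorial (l + s) : ℝ) ≤ 1 / 4 := by
  have hfac : (l + s).choose l * (l.factorial * s.factorial) = (l + s).factorial := by
    have := Nat.choose_mul_factorial_mul_factorial (Nat.le_add_right l s)
    simpa [Nat.add_sub_cancel_left, mul_assoc] using this
  have hch : 4 ≤ (l + s).choose l := by
    have h1 : (l + 3).choose l ≤ (l + s).choose l :=
      Nat.choose_le_choose l (by omega)
    have h2 : (l + 3).choose l = (l + 3).choose 3 := by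
      rw [← Nat.choose_symm_add]
    have h3 : (1 + 3).choose 3 ≤ (l + 3).choose 3 :=
      Nat.choose_le_choose 3 (by omega)
    have h4 : (1 + 3).choose 3 = 4 := by decide
    omega
  have hpos : (0:ℝ) < (l.factorial : ℝ) * (s.factorial : ℝ) := by
    positivity
  rw [div_le_div_iff₀ (by positivity) (by norm_num)]
  have : (4:ℝ) * ((l.factorial : ℝ) * (s.factorial : ℝ)) ≤ ((l + s).factorial : ℝ) := by
    calc (4:ℝ) * ((l.factorial : ℝ) * (s.factorial : ℝ))
        ≤ ((l + s).choose l : ℝ) * ((l.factorial : ℝ) * (s.factorial : ℝ)) := by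
          apply mul_le_mul_of_nonneg_right _ hpos.le
          exact_mod_cast hch
      _ = ((l + s).factorial : ℝ) := by exact_mod_cast congrArg (Nat.cast (R := ℝ)) hfac
  linarith

/-- For all integers `l, r, m ≥ 1` and `s ≥ 3`:
`(m/(m+l+r+s)) · ( l!·s!/(l+s)! + r!·s!/(r+s)! ) ≤ 1/2`. -/
theorem stmt_5 (l r m s : ℕ) (hl : 1 ≤ l) (hr : 1 ≤ r) (hm : 1 ≤ m) (hs : 3 ≤ s) :
    ((m : ℝ) / ((m : ℝ) + l + r + s)) *
      ((Nat.factorial l : ℝ) * (Nat.factorial s : ℝ) / (Nat.factorial (l + s) : ℝ) +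
        (Nat.factorial r : ℝ) * (Nat.factorial s : ℝ) / (Nat.factorial (r + s) : ℝ)) ≤
    1 / 2 := by
  have hL := aux_term_le l s hl hs
  have hR := aux_term_le r s hr hs
  have hsum : (Nat.factorial l : ℝ) * (Nat.factorial s : ℝ) / (Nat.factorial (l + s) : ℝ) +
      (Nat.factorial r : ℝ) * (Nat.factorial s : ℝ) / (Nat.factorial (r + s) : ℝ) ≤ 1 / 2 := by
    linarith
  have hnn : (0:ℝ) ≤ (Nat.factorial l : ℝ) * (Nat.factorial s : ℝ) / (Nat.factorial (l + s) : ℝ) +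
      (Nat.factorial r : ℝ) * (Nat.factorial s : ℝ) / (Nat.factorial (r + s) : ℝ) := by
    positivity
  have hml : (m:ℝ) ≤ (m : ℝ) + l + r + s := by
    have : (0:ℝ) ≤ (l:ℝ) + r + s := by positivity
    linarith
  have hden : (0:ℝ) < (m : ℝ) + l + r + s := by
    have : (1:ℝ) ≤ (m:ℝ) := by exact_mod_cast hm
    have : (0:ℝ) ≤ (l:ℝ) + r + s := by positivity
    linarith
  have hfrac1 : (m : ℝ) / ((m : ℝ) + l + r + s) ≤ 1 := by
    rw [div_le_one hden]; exact hml
  have hfrac0 : (0:ℝ) ≤ (m : ℝ) / ((m : ℝ) + l + r + s) := by positivity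
  calc ((m : ℝ) / ((m : ℝ) + l + r + s)) * _ ≤ 1 * (1/2) :=
        mul_le_mul hfrac1 hsum hnn (by norm_num)
    _ = 1 / 2 := by norm_num
end

section
/- For all integers l, r, m ≥ 1, the following inequality holds: (m/(m+l+r+2)) · ( 2/((l+1)(l+2)) + 2/((r+1)(r+2)) ) ≤ 2/3. -/
/-- For all integers `l, r, m ≥ 1`:
`(m/(m+l+r+2)) · ( 2/((l+1)(l+2)) + 2/((r+1)(r+2)) ) ≤ 2/3`. -/
theorem stmt_6 (l r m : ℕ) (hl : 1 ≤ l) (hr : 1 ≤ r) (hm : 1 ≤ m) :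
    ((m : ℝ) / ((m : ℝ) + l + r + 2)) *
      (2 / (((l : ℝ) + 1) * ((l : ℝ) + 2)) + 2 / (((r : ℝ) + 1) * ((r : ℝ) + 2))) ≤
    2 / 3 := by
  have hl' : (1:ℝ) ≤ l := by exact_mod_cast hl
  have hr' : (1:ℝ) ≤ r := by exact_mod_cast hr
  have hm' : (1:ℝ) ≤ m := by exact_mod_cast hm
  have h1 : (m : ℝ) / ((m : ℝ) + l + r + 2) ≤ 1 := by
    rw [div_le_one (by linarith)]; linarith
  have h1' : (0:ℝ) ≤ (m : ℝ) / ((m : ℝ) + l + r + 2) :=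
    div_nonneg (by linarith) (by linarith)
  have hL : 2 / (((l : ℝ) + 1) * ((l : ℝ) + 2)) ≤ 1/3 := by
    rw [div_le_div_iff₀ (by nlinarith) (by norm_num)]; nlinarith
  have hR : 2 / (((r : ℝ) + 1) * ((r : ℝ) + 2)) ≤ 1/3 := by
    rw [div_le_div_iff₀ (by nlinarith) (by norm_num)]; nlinarith
  calc ((m : ℝ) / ((m : ℝ) + l + r + 2)) *
      (2 / (((l : ℝ) + 1) * ((l : ℝ) + 2)) + 2 / (((r : ℝ) + 1) * ((r : ℝ) + 2)))
      ≤ 1 * (2/3) := by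
        apply mul_le_mul h1 (by linarith) _ zero_le_one
        positivity
    _ = 2/3 := by norm_num
end

section
/- Let d ≥ 1 be an integer and x₁, ..., x_d be real numbers with xᵢ ≥ 1 for all i. Then Σ_{i=1}^{d} xᵢ / ( (5 + 2(d−i) + Σ_{j=i}^{d} xⱼ) · (4 + 2(d−i) + Σ_{j=i+1}^{d} xⱼ) ) ≤ 1/4. -/
/-- For an integer `d ≥ 1` and reals `x₁, ..., x_d` with `xᵢ ≥ 1`:
`Σ_{i=1}^{d} xᵢ / ((5 + 2(d−i) + Σ_{j=i}^{d} xⱼ) · (4 + 2(d−i) + Σ_{j=i+1}^{d} xⱼ)) ≤ 1/4`. -/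
theorem stmt_8 (d : ℕ) (hd : 1 ≤ d) (x : ℕ → ℝ)
    (hx : ∀ i, 1 ≤ i → i ≤ d → 1 ≤ x i) :
    ∑ i ∈ Finset.Icc 1 d,
      x i / ((5 + 2 * ((d : ℝ) - (i : ℝ)) + ∑ j ∈ Finset.Icc i d, x j) *
        (4 + 2 * ((d : ℝ) - (i : ℝ)) + ∑ j ∈ Finset.Icc (i + 1) d, x j)) ≤ 1 / 4 := by
  set S : ℕ → ℝ := fun i => 4 + 2 * ((d : ℝ) - (i : ℝ)) + ∑ j ∈ Finset.Icc (i + 1) d, x j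
    with hS
  have hsumnn : ∀ i, (0 : ℝ) ≤ ∑ j ∈ Finset.Icc (i + 1) d, x j := by
    intro i
    refine Finset.sum_nonneg fun j hj => ?_
    have hj' := Finset.mem_Icc.mp hj
    have h1 : 1 ≤ j := by omega
    linarith [hx j h1 hj'.2]
  have hSpos : ∀ i, i ≤ d → 0 < S i := by
    intro i hi
    have : (i : ℝ) ≤ d := Nat.cast_le.mpr hi
    have := hsumnn i
    simp only [hS]; linarith
  -- per-term bound
  have hterm : ∀ i ∈ Finset.Icc 1 d,
      x i / ((5 + 2 * ((d : ℝ) - (i : ℝ)) + ∑ j ∈ Finset.Icc i d, x j) *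
        (4 + 2 * ((d : ℝ) - (i : ℝ)) + ∑ j ∈ Finset.Icc (i + 1) d, x j))
      ≤ 1 / S i - 1 / S (i - 1) := by
    intro i hi
    obtain ⟨h1, h2⟩ := Finset.mem_Icc.mp hi
    have hsplit : ∑ j ∈ Finset.Icc i d, x j = x i + ∑ j ∈ Finset.Icc (i + 1) d, x j := by
      rw [Finset.Icc_add_one_left_eq_Ioc, ← Finset.Icc_erase_left,
        Finset.add_sum_erase _ _ (Finset.mem_Icc.mpr ⟨le_refl i, h2⟩)]
    have hipred : S (i - 1) = S i + x i + 2 := by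
      have hcast : ((i - 1 : ℕ) : ℝ) = (i : ℝ) - 1 := by
        have : (i - 1) + 1 = i := by omega
        push_cast [Nat.cast_sub h1]; ring
      have hicc : Finset.Icc ((i - 1) + 1) d = Finset.Icc i d := by
        congr 1; omega
      simp only [hS, hicc, hcast, hsplit]; ring
    have hSi : 0 < S i := hSpos i h2
    have hxI : 1 ≤ x i := hx i h1 h2
    have hD : (5 + 2 * ((d : ℝ) - (i : ℝ)) + ∑ j ∈ Finset.Icc i d, x j) = S i + x i + 1 := by
      simp only [hS, hsplit]; ring
    rw [hD, hipred,
      show (4 + 2 * ((d : ℝ) - (i : ℝ)) + ∑ j ∈ Finset.Icc (i + 1) d, x j) = S i from rfl]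
    have h5 : 0 < S i + x i + 1 := by linarith
    have h6 : 0 < S i + x i + 2 := by linarith
    rw [div_sub_div _ _ (ne_of_gt hSi) (ne_of_gt h6), div_le_div_iff₀ (by positivity) (by positivity)]
    nlinarith [mul_pos hSi h6, sq_nonneg (S i)]
  calc ∑ i ∈ Finset.Icc 1 d,
      x i / ((5 + 2 * ((d : ℝ) - (i : ℝ)) + ∑ j ∈ Finset.Icc i d, x j) *
        (4 + 2 * ((d : ℝ) - (i : ℝ)) + ∑ j ∈ Finset.Icc (i + 1) d, x j))
      ≤ ∑ i ∈ Finset.Icc 1 d, (1 / S i - 1 / S (i - 1)) := Finset.sum_le_sum hterm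
    _ = ∑ i ∈ Finset.range d, (1 / S (i + 1) - 1 / S i) := by
        rw [← Finset.Ico_add_one_right_eq_Icc, Finset.sum_Ico_eq_sum_range]
        simp only [Nat.add_sub_cancel_left]
        exact Finset.sum_congr rfl fun i _ => by rw [Nat.add_comm 1 i]
    _ = 1 / S d - 1 / S 0 := Finset.sum_range_sub (fun k => 1 / S k) d
    _ ≤ 1 / 4 := by
        have hSd : S d = 4 := by
          simp only [hS]
          rw [Finset.Icc_eq_empty (by omega)]
          simp
        have hS0 : 0 < S 0 := hSpos 0 (by omega)
        rw [hSd]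
        have : 0 < 1 / S 0 := by positivity
        linarith
end

section
/- For all real numbers x₁ ≥ 1, x₂ ≥ 1, and s ≥ 3, the following inequality holds: x₁/( (x₁ + x₂ + 4 + s)·(x₂ + 3 + s) ) + x₂/( (x₂ + 2 + s)·(s + 1) ) ≤ (x₁ + x₂)/( (x₁ + x₂ + 2 + s)·(s + 1) ). -/
/-- For all reals `x₁ ≥ 1`, `x₂ ≥ 1`, `s ≥ 3`:
`x₁/((x₁+x₂+4+s)(x₂+3+s)) + x₂/((x₂+2+s)(s+1)) ≤ (x₁+x₂)/((x₁+x₂+2+s)(s+1))`. -/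
theorem stmt_9 (x₁ x₂ s : ℝ) (h₁ : 1 ≤ x₁) (h₂ : 1 ≤ x₂) (hs : 3 ≤ s) :
    x₁ / ((x₁ + x₂ + 4 + s) * (x₂ + 3 + s)) + x₂ / ((x₂ + 2 + s) * (s + 1)) ≤
      (x₁ + x₂) / ((x₁ + x₂ + 2 + s) * (s + 1)) := by
  have a1 : (0:ℝ) < x₁ + x₂ + 4 + s := by linarith
  have a2 : (0:ℝ) < x₂ + 3 + s := by linarith
  have a3 : (0:ℝ) < x₂ + 2 + s := by linarith
  have a4 : (0:ℝ) < s + 1 := by linarith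
  have a5 : (0:ℝ) < x₁ + x₂ + 2 + s := by linarith
  rw [div_add_div _ _ (by positivity) (by positivity), div_le_div_iff₀ (by positivity) (by positivity)]
  nlinarith [mul_pos a1 a2, mul_pos a3 a4, mul_pos a5 a4, sq_nonneg (x₁-1), sq_nonneg (x₂-1), sq_nonneg (s-3), mul_nonneg (sub_nonneg.2 h₁) (sub_nonneg.2 h₂), mul_nonneg (sub_nonneg.2 h₁) (by linarith : (0:ℝ) ≤ s-3), mul_nonneg (sub_nonneg.2 h₂) (by linarith : (0:ℝ) ≤ s-3)]
end

section
/- For every real number α with 0 < α < 1, the value f(α) = (2α² − 2α − 1)/((α + 1)(α − 2)) satisfies 1/2 < f(α) ≤ 2/3. -/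
/-- For every real `α ∈ (0,1)`, `f(α) = (2α² − 2α − 1)/((α+1)(α−2))`
satisfies `1/2 < f(α) ≤ 2/3`. -/
theorem stmt_11 (α : ℝ) (h0 : 0 < α) (h1 : α < 1) :
    1 / 2 < (2 * α ^ 2 - 2 * α - 1) / ((α + 1) * (α - 2)) ∧
      (2 * α ^ 2 - 2 * α - 1) / ((α + 1) * (α - 2)) ≤ 2 / 3 := by
  have hd : (α + 1) * (α - 2) < 0 := by nlinarith
  constructor
  · rw [lt_div_iff_of_neg hd]
    nlinarith
  · rw [div_le_iff_of_neg hd]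
    nlinarith [sq_nonneg (α - 1/2)]
end

section
/- For every real number r with 0 < r < 1, the value g(r) = (1−r)/2 + r/(1+r) satisfies 1/2 < g(r) ≤ 2 − √2, and g(√2 − 1) = 2 − √2; in particular the maximum value of g on (0,1) is 2 − √2, attained at r = √2 − 1. -/
/-- For every real `r ∈ (0,1)`, `g(r) = (1−r)/2 + r/(1+r)` satisfies
`1/2 < g(r) ≤ 2 − √2`, and `g(√2 − 1) = 2 − √2`; in particular the maximum of `g`
on `(0,1)` is `2 − √2`, attained at `r = √2 − 1`. -/
theorem stmt_15 (r : ℝ) (h0 : 0 < r) (h1 : r < 1) :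
    (1 / 2 < (1 - r) / 2 + r / (1 + r) ∧
      (1 - r) / 2 + r / (1 + r) ≤ 2 - Real.sqrt 2) ∧
    (1 - (Real.sqrt 2 - 1)) / 2 + (Real.sqrt 2 - 1) / (1 + (Real.sqrt 2 - 1)) =
      2 - Real.sqrt 2 := by
  have hs : Real.sqrt 2 ^ 2 = 2 := Real.sq_sqrt (by norm_num)
  have hs1 : (1:ℝ) < Real.sqrt 2 := by nlinarith [Real.sqrt_nonneg 2]
  have hr : (0:ℝ) < 1 + r := by linarith
  refine ⟨⟨?_, ?_⟩, ?_⟩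
  · rw [div_add_div _ _ (by norm_num : (2:ℝ) ≠ 0) (ne_of_gt hr), lt_div_iff₀ (by positivity)]
    nlinarith
  · rw [div_add_div _ _ (by norm_num : (2:ℝ) ≠ 0) (ne_of_gt hr), div_le_iff₀ (by positivity)]
    nlinarith [sq_nonneg ((1 + r) - Real.sqrt 2)]
  · have h2 : Real.sqrt 2 ≠ 0 := by positivity
    field_simp
    nlinarith
end
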